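/- Let q be a prime power and u, v ∈ D_q. Then Ẽ(u) ∩ Ẽ(v) = ∅ if and only if there exist an element α ∈ 𝔽_q with α³ = 1 and α ≠ 1, and nonzero scalars λ, μ ∈ 𝔽_q*, such that u = λ·(1, α, α²) and v = μ·(1, α², α). -/

import Mathlib

open Set Pointwise

variable {F : Type*} [Field F]

/-- Hamming distance on `𝔽_q³`. -/
noncomputable def hdist (u v : Fin 3 → F) : ℕ := Set.ncard {i : Fin 3 | u i ≠ v i}

/-- The ball of radius 1 centered at `u`. -/
def ball (u : Fin 3 → F) : Set (Fin 3 → F) := {v | hdist u v ≤ 1}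

/-- The extended ball of `u`: the union of the balls centered at scalar multiples of `u`. -/
def extBall (u : Fin 3 → F) : Set (Fin 3 → F) := ⋃ l : F, ball (l • u)

/-- `D_q`: vectors with pairwise distinct, nonzero coordinates. -/
def Dq : Set (Fin 3 → F) :=
  {u | u 0 ≠ u 1 ∧ u 0 ≠ u 2 ∧ u 1 ≠ u 2 ∧ u 0 ≠ 0 ∧ u 1 ≠ 0 ∧ u 2 ≠ 0}

/-- `B̃(u) = B(u) ∩ D_q`. -/
def ballD (u : Fin 3 → F) : Set (Fin 3 → F) := ball u ∩ Dq

/-- `Ẽ(u) = E(u) ∩ D_q`. -/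
def extBallD (u : Fin 3 → F) : Set (Fin 3 → F) := extBall u ∩ Dq

/-- `H` is a short covering if the extended balls centered at its elements cover the space. -/
def ShortCovering (H : Set (Fin 3 → F)) : Prop := (⋃ h ∈ H, extBall h) = Set.univ

/-!
A point of `E(u)` agrees with a multiple of `u` off one coordinate. For `u, v ∈ D_q` and distinct
`i, j, k`, the vector that equals `v i • u` off `k` and has `k`-th coordinate `u i * v k` lies in
`E(u) ∩ E(v)`, and it lies in `D_q` unless `v i * u j = u i * v k`. Four of these relations force
`u ∝ (1, α, α²)` and `v ∝ (1, α², α)` with `α = u₁ / u₀` a nontrivial cube root of unity.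

Conversely, `u = l • (1, α, α²)` satisfies `u (t + 1) = α * u t` cyclically and `v = m • (1, α², α)`
satisfies the same with ratio `α²`. A point of `Ẽ(u) ∩ Ẽ(v)` would then have a cyclically
consecutive pair of coordinates in ratio `α` and another in ratio `α²`. As `α * α² = 1` and
`α ≠ α²`, going around the cycle always produces two equal coordinates.
-/

lemma Fin.three_eq_of_ne_of_ne {i j k t : Fin 3} (hij : i ≠ j) (hik : i ≠ k) (hjk : j ≠ k)
    (htj : t ≠ j) (htk : t ≠ k) : t = i := by
  omega

lemma hdist_le_one_iff {K : Type*} (u v : Fin 3 → K) :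
    hdist u v ≤ 1 ↔ ∃ k, ∀ i ≠ k, u i = v i := by
  rw [hdist, ncard_le_one_iff_subset_singleton]
  simp only [subset_def, mem_ofPred_eq, mem_singleton_iff, not_imp_comm]

lemma mem_extBall_iff {u w : Fin 3 → F} : w ∈ extBall u ↔ ∃ c k, ∀ i ≠ k, c * u i = w i := by
  simp only [extBall, ball, mem_iUnion, mem_ofPred_eq, hdist_le_one_iff, Pi.smul_apply,
    smul_eq_mul]

lemma Fin.three_injective_iff {α : Type*} {u : Fin 3 → α} :
    Function.Injective u ↔ u 0 ≠ u 1 ∧ u 0 ≠ u 2 ∧ u 1 ≠ u 2 := by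
  refine ⟨fun h => ⟨h.ne (by decide), h.ne (by decide), h.ne (by decide)⟩, ?_⟩
  rintro ⟨h01, h02, h12⟩ i j hij
  fin_cases i <;> fin_cases j <;> simp_all [eq_comm]

lemma mem_Dq_iff {u : Fin 3 → F} : u ∈ Dq ↔ Function.Injective u ∧ ∀ i, u i ≠ 0 := by
  rw [Fin.three_injective_iff, Fin.forall_fin_succ, Fin.forall_fin_succ, Fin.forall_fin_succ]
  simp [Dq, and_assoc]

lemma mul_eq_mul_of_extBallD_inter_eq_empty {u v : Fin 3 → F} (hu : u ∈ Dq) (hv : v ∈ Dq)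
    (h : extBallD u ∩ extBallD v = ∅) {i j k : Fin 3} (hij : i ≠ j) (hik : i ≠ k)
    (hjk : j ≠ k) : v i * u j = u i * v k := by
  rw [mem_Dq_iff] at hu hv
  by_contra hne
  set w := Function.update (v i • u) k (u i * v k) with hw
  have hw_ne : ∀ t ≠ k, w t = v i * u t := fun t ht => by simp [w, ht]
  have hwu : w ∈ extBall u := mem_extBall_iff.2 ⟨v i, k, fun t ht => (hw_ne t ht).symm⟩
  have hwv : w ∈ extBall v := by
    refine mem_extBall_iff.2 ⟨u i, j, fun t htj => ?_⟩
    by_cases htk : t = k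
    · simp [w, htk]
    · rw [Fin.three_eq_of_ne_of_ne hij hik hjk htj htk, hw_ne i hik, mul_comm]
  have hwk : ∀ t ≠ k, w t ≠ w k := by
    intro t htk hwt
    rw [hw_ne t htk, hw, Function.update_self] at hwt
    by_cases htj : t = j
    · exact hne (htj ▸ hwt)
    · rw [Fin.three_eq_of_ne_of_ne hij hik hjk htj htk, mul_comm] at hwt
      exact hik (hv.1 (mul_left_cancel₀ (hu.2 i) hwt))
  have hwD : w ∈ Dq := by
    refine mem_Dq_iff.2 ⟨fun t t' htt' => ?_, fun t => ?_⟩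
    · by_cases ht : t = k <;> by_cases ht' : t' = k
      · rw [ht, ht']
      · exact absurd (ht ▸ htt').symm (hwk t' ht')
      · exact absurd (ht' ▸ htt') (hwk t ht)
      · rw [hw_ne t ht, hw_ne t' ht'] at htt'
        exact hu.1 (mul_left_cancel₀ (hv.2 i) htt')
    · by_cases ht : t = k
      · simp [w, ht, hu.2 i, hv.2 k]
      · simp [hw_ne t ht, hu.2 t, hv.2 i]
  exact (eq_empty_iff_forall_notMem.1 h w) ⟨⟨hwu, hwD⟩, hwv, hwD⟩

lemma exists_cube_root_of_forall_mul_eq {u v : Fin 3 → F} (hu : u ∈ Dq) (hv0 : v 0 ≠ 0)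
    (h : ∀ i j k : Fin 3, i ≠ j → i ≠ k → j ≠ k → v i * u j = u i * v k) :
    ∃ α : F, α ^ 3 = 1 ∧ α ≠ 1 ∧ ∃ l m : F, l ≠ 0 ∧ m ≠ 0 ∧
      u = l • ![1, α, α ^ 2] ∧ v = m • ![1, α ^ 2, α] := by
  obtain ⟨hu01, -, -, hu0, hu1, -⟩ := hu
  have h012 := h 0 1 2 (by decide) (by decide) (by decide)
  have h021 := h 0 2 1 (by decide) (by decide) (by decide)
  have h102 := h 1 0 2 (by decide) (by decide) (by decide)
  have h120 := h 1 2 0 (by decide) (by decide) (by decide)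
  have hsq : u 0 * u 2 = u 1 ^ 2 :=
    mul_left_cancel₀ hv0 (by linear_combination u 0 * h021 + u 0 * h102 - u 1 * h012)
  have hsq' : u 2 ^ 2 = u 0 * u 1 :=
    mul_left_cancel₀ hv0 (by linear_combination u 2 * h021 + u 0 * h120)
  have hcube : u 1 ^ 3 = u 0 ^ 3 :=
    mul_left_cancel₀ hu1 (by linear_combination u 0 ^ 2 * hsq' - (u 0 * u 2 + u 1 ^ 2) * hsq)
  refine ⟨u 1 / u 0, ?_, ?_, u 0, v 0, hu0, hv0, ?_, ?_⟩
  · rw [div_pow, hcube, div_self (pow_ne_zero 3 hu0)]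
  · rw [Ne, div_eq_one_iff_eq hu0]
    exact hu01.symm
  · ext i
    fin_cases i <;>
      simp only [Fin.zero_eta, Fin.mk_one, Fin.reduceFinMk, Fin.isValue, Pi.smul_apply,
        Matrix.cons_val_zero, Matrix.cons_val_one, Matrix.cons_val, smul_eq_mul, mul_one] <;>
      field_simp
    linear_combination hsq
  · ext i
    fin_cases i <;>
      simp only [Fin.zero_eta, Fin.mk_one, Fin.reduceFinMk, Fin.isValue, Pi.smul_apply,
        Matrix.cons_val_zero, Matrix.cons_val_one, Matrix.cons_val, smul_eq_mul, mul_one] <;>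
      field_simp
    · linear_combination v 0 * hsq - u 0 * h021
    · linear_combination -h012

lemma exists_mul_of_mem_extBall {u w : Fin 3 → F} {α : F} (hu : ∀ t, u (t + 1) = α * u t)
    (hw : w ∈ extBall u) : ∃ k, w (k + 2) = α * w (k + 1) := by
  obtain ⟨c, k, hk⟩ := mem_extBall_iff.1 hw
  refine ⟨k, ?_⟩
  rw [← hk (k + 1) (by omega), ← hk (k + 2) (by omega), show k + 2 = k + 1 + 1 by omega, hu]
  ring

lemma eq_of_mem_Dq_of_mul_eq_one {w : Fin 3 → F} (hw : w ∈ Dq) {α β : F} (hαβ : α * β = 1)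
    {k k' : Fin 3} (hk : w (k + 2) = α * w (k + 1)) (hk' : w (k' + 2) = β * w (k' + 1)) :
    α = β := by
  rw [mem_Dq_iff] at hw
  obtain ⟨s, rfl⟩ : ∃ s, k' = k + s := ⟨k' - k, by abel⟩
  fin_cases s
  · simp only [Fin.zero_eta, add_zero, hk] at hk'
    exact mul_right_cancel₀ (hw.2 _) hk'
  · simp only [Fin.mk_one, show k + 1 + 2 = k by omega, show k + 1 + 1 = k + 2 by omega] at hk'
    refine absurd (hw.1 ?_) (show k ≠ k + 1 by omega)
    rw [hk', hk, ← mul_assoc, mul_comm β, hαβ, one_mul]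
  · simp only [Fin.reduceFinMk, show k + 2 + 2 = k + 1 by omega, show k + 2 + 1 = k by omega] at hk'
    refine absurd (hw.1 ?_) (show k + 2 ≠ k by omega)
    rw [hk, hk', ← mul_assoc, hαβ, one_mul]

lemma extBallD_inter_eq_empty {α : F} (hα3 : α ^ 3 = 1) (hα1 : α ≠ 1) (l m : F) :
    extBallD (l • ![1, α, α ^ 2]) ∩ extBallD (m • ![1, α ^ 2, α]) = ∅ := by
  have hu : ∀ t, (l • ![1, α, α ^ 2]) (t + 1) = α * (l • ![1, α, α ^ 2]) t := by
    intro t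
    fin_cases t <;>
      simp only [Fin.zero_eta, Fin.mk_one, Fin.reduceFinMk, Fin.isValue, Fin.reduceAdd, zero_add,
        Pi.smul_apply, Matrix.cons_val_zero, Matrix.cons_val_one, Matrix.cons_val, smul_eq_mul,
        mul_one]
    · ring
    · ring
    · linear_combination (-l) * hα3
  have hv : ∀ t, (m • ![1, α ^ 2, α]) (t + 1) = α ^ 2 * (m • ![1, α ^ 2, α]) t := by
    intro t
    fin_cases t <;>
      simp only [Fin.zero_eta, Fin.mk_one, Fin.reduceFinMk, Fin.isValue, Fin.reduceAdd, zero_add,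
        Pi.smul_apply, Matrix.cons_val_zero, Matrix.cons_val_one, Matrix.cons_val, smul_eq_mul,
        mul_one]
    · ring
    · linear_combination (-m * α) * hα3
    · linear_combination (-m) * hα3
  have hα0 : α ≠ 0 := by rintro rfl; norm_num at hα3
  refine eq_empty_iff_forall_notMem.2 ?_
  rintro w ⟨⟨hwu, hw⟩, hwv, -⟩
  obtain ⟨k, hk⟩ := exists_mul_of_mem_extBall hu hwu
  obtain ⟨k', hk'⟩ := exists_mul_of_mem_extBall hv hwv
  have := eq_of_mem_Dq_of_mul_eq_one hw (by linear_combination hα3) hk hk'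
  exact hα1 (mul_left_cancel₀ hα0 (by linear_combination this)).symm

theorem stmt_13_general (F : Type*) [Field F] (u v : Fin 3 → F)
    (hu : u ∈ (Dq : Set (Fin 3 → F))) (hv : v ∈ (Dq : Set (Fin 3 → F))) :
    extBallD u ∩ extBallD v = ∅ ↔
      ∃ α : F, α ^ 3 = 1 ∧ α ≠ 1 ∧ ∃ l m : F, l ≠ 0 ∧ m ≠ 0 ∧
        u = l • ![1, α, α ^ 2] ∧ v = m • ![1, α ^ 2, α] := by
  constructor
  · intro h
    exact exists_cube_root_of_forall_mul_eq hu ((mem_Dq_iff.1 hv).2 0)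
      fun i j k hij hik hjk => mul_eq_mul_of_extBallD_inter_eq_empty hu hv h hij hik hjk
  · rintro ⟨α, hα3, hα1, l, m, -, -, rfl, rfl⟩
    exact extBallD_inter_eq_empty hα3 hα1 l m

theorem stmt_13 (q : ℕ) (hq : IsPrimePow q) (F : Type*) [Field F] [Fintype F]
    (hcard : Fintype.card F = q) (u v : Fin 3 → F)
    (hu : u ∈ (Dq : Set (Fin 3 → F))) (hv : v ∈ (Dq : Set (Fin 3 → F))) :
    extBallD u ∩ extBallD v = ∅ ↔
      ∃ α : F, α ^ 3 = 1 ∧ α ≠ 1 ∧ ∃ l m : F, l ≠ 0 ∧ m ≠ 0 ∧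
        u = l • ![1, α, α ^ 2] ∧ v = m • ![1, α ^ 2, α] :=
  stmt_13_general F u v hu hv
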